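/- arXiv:1904.08382 — 2 statements merged into one kernel-verified Lean document; each statement's English description precedes it below -/
import Mathlib

section
/- Let G = (V,E) be a directed graph, s ∈ V, and let G_0 = G, with G_{j+1} obtained from G_j by reversing the edges of a path π_j from s in G_j. Fix i ≥ 1 and suppose S is the set of vertices reachable from s in G_i (so there are no edges from S to T = V \ S in G_i) and that ℓ ≤ i of the paths π₀, …, π_{i-1} end in T. Then S is a minimal ℓ-edge-out component of G containing s: S has exactly ℓ edges leaving it in G, and no proper subset of S containing s has ℓ or fewer edges leaving it in G. -/
set_option linter.unusedSectionVars false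


variable {V : Type*} [Fintype V] [DecidableEq V]

/-- The (directed) edges of the path `s :: l`. -/
def pathEdges (s : V) (l : List V) : List (V × V) :=
  (s :: l).zip l

/-- A (simple) path from `s` with vertex list `s :: l` in the graph with edge multiset `F`. -/
def IsPathFrom (F : Multiset (V × V)) (s : V) (l : List V) : Prop :=
  List.Chain (fun a b => (a, b) ∈ F) s l ∧ (s :: l).Nodup

/-- The graph obtained by reversing the edges of the path `s :: l`. -/
def revAlong (F : Multiset (V × V)) (s : V) (l : List V) : Multiset (V × V) :=
  F - (pathEdges s l : Multiset (V × V)) + ((pathEdges s l).map Prod.swap : Multiset (V × V))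

lemma pathEdges_nil (s : V) : pathEdges s [] = [] := rfl

lemma pathEdges_cons (s b : V) (t : List V) :
    pathEdges s (b :: t) = (s, b) :: pathEdges b t := by
  simp [pathEdges, List.zip_cons_cons]

lemma mem_pathEdges_fst : ∀ (l : List V) (s : V) (e : V × V),
    e ∈ pathEdges s l → e.1 ∈ s :: l
  | [], s, e, h => by simp [pathEdges_nil] at h
  | b :: t, s, e, h => by
    rw [pathEdges_cons] at h
    rcases List.mem_cons.1 h with h | h
    · subst h; simp
    · have := mem_pathEdges_fst t b e h
      simp only [List.mem_cons] at this ⊢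
      tauto

lemma pathEdges_nodup : ∀ (l : List V) (s : V), (s :: l).Nodup → (pathEdges s l).Nodup
  | [], s, _ => by simp [pathEdges_nil]
  | b :: t, s, h => by
    rw [pathEdges_cons]
    have h' : (b :: t).Nodup := h.of_cons
    refine List.nodup_cons.2 ⟨?_, pathEdges_nodup t b h'⟩
    intro hmem
    have := mem_pathEdges_fst t b (s, b) hmem
    exact (List.nodup_cons.1 h).1 this

lemma pathEdges_mem {F : Multiset (V × V)} : ∀ (l : List V) (s : V),
    List.Chain (fun a b => (a, b) ∈ F) s l → ∀ e ∈ pathEdges s l, e ∈ F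
  | [], s, _, e, he => by simp [pathEdges_nil] at he
  | b :: t, s, hc, e, he => by
    rw [pathEdges_cons] at he
    rcases List.chain_cons.1 hc with ⟨h1, h2⟩
    rcases List.mem_cons.1 he with h | h
    · subst h; exact h1
    · exact pathEdges_mem t b h2 e h

lemma pathEdges_le {F : Multiset (V × V)} {s : V} {l : List V} (hp : IsPathFrom F s l) :
    (pathEdges s l : Multiset (V × V)) ≤ F := by
  rw [Multiset.le_iff_count]
  intro e
  by_cases he : e ∈ pathEdges s l
  · have h1 : Multiset.count e (pathEdges s l : Multiset (V × V)) ≤ 1 :=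
      (Multiset.nodup_iff_count_le_one.1 (by exact pathEdges_nodup l s hp.2)) e
    have h2 : 1 ≤ Multiset.count e F :=
      Multiset.one_le_count_iff_mem.2 (pathEdges_mem l s hp.1 e he)
    omega
  · simp [Multiset.count_eq_zero_of_notMem, he]

lemma cross_telescope (A : Finset V) : ∀ (l : List V) (s : V),
    (((pathEdges s l : Multiset (V × V)).countP (fun e => e.1 ∈ A ∧ e.2 ∉ A) : ℤ))
      - ((pathEdges s l : Multiset (V × V)).countP (fun e => e.2 ∈ A ∧ e.1 ∉ A) : ℤ)
      = (if s ∈ A then (1 : ℤ) else 0)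
        - (if (s :: l).getLast (List.cons_ne_nil s l) ∈ A then (1 : ℤ) else 0)
  | [], s => by by_cases h : s ∈ A <;> simp [pathEdges_nil, h]
  | b :: t, s => by
    have ih := cross_telescope A t b
    rw [pathEdges_cons]
    have hcoe : ((((s, b) :: pathEdges b t : List (V × V))) : Multiset (V × V))
        = (s, b) ::ₘ (pathEdges b t : Multiset (V × V)) := by
      simp
    rw [hcoe, Multiset.countP_cons, Multiset.countP_cons]
    have hlast : (s :: b :: t).getLast (List.cons_ne_nil s (b :: t))
        = (b :: t).getLast (List.cons_ne_nil b t) := by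
      exact List.getLast_cons (List.cons_ne_nil b t)
    rw [hlast]
    by_cases hs : s ∈ A <;> by_cases hb : b ∈ A <;>
      simp only [hs, hb, if_true, if_false, not_true, not_false_iff, and_true, and_false,
        true_and, false_and] at ih ⊢ <;> push_cast <;> omega

lemma revAlong_count (F : Multiset (V × V)) (s : V) (l : List V) (A : Finset V)
    (hs : s ∈ A) (hp : IsPathFrom F s l) :
    ((revAlong F s l).filter (fun e => e.1 ∈ A ∧ e.2 ∉ A)).card
      + (if (s :: l).getLast (List.cons_ne_nil s l) ∈ A then 0 else 1)
      = (F.filter (fun e => e.1 ∈ A ∧ e.2 ∉ A)).card := by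
  set P : Multiset (V × V) := (pathEdges s l : Multiset (V × V)) with hP
  have hPF : P ≤ F := pathEdges_le hp
  set p : V × V → Prop := fun e => e.1 ∈ A ∧ e.2 ∉ A with hp'
  have hfle : P.filter p ≤ F.filter p := Multiset.filter_le_filter p hPF
  have hcard : ((revAlong F s l).filter p).card
      = (F.filter p).card - (P.filter p).card + ((P.map Prod.swap).filter p).card := by
    rw [revAlong, Multiset.filter_add, Multiset.filter_sub, Multiset.card_add,
      Multiset.card_sub hfle, Multiset.map_coe]
  have hswap : ((P.map Prod.swap).filter p).card
      = P.countP (fun e => e.2 ∈ A ∧ e.1 ∉ A) := by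
    rw [Multiset.filter_map, Multiset.card_map, ← Multiset.countP_eq_card_filter]
    rfl
  have htel := cross_telescope A l s
  rw [if_pos hs] at htel
  rw [← hP] at htel
  simp only [← hp'] at htel
  have hout : (P.filter p).card = P.countP p := (Multiset.countP_eq_card_filter _ _).symm
  have hle2 : (P.filter p).card ≤ (F.filter p).card := Multiset.card_le_card hfle
  rw [hcard, hswap]
  simp only [← hp']
  by_cases hlast : (s :: l).getLast (List.cons_ne_nil s l) ∈ A <;>
    simp only [hlast, if_true, if_false] at htel ⊢ <;> omega

lemma reach_subset {F : Multiset (V × V)} {A : Finset V}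
    (h : F.filter (fun e => e.1 ∈ A ∧ e.2 ∉ A) = 0)
    {s v : V} (hs : s ∈ A) (hr : Relation.ReflTransGen (fun a b => (a, b) ∈ F) s v) :
    v ∈ A := by
  induction hr with
  | refl => exact hs
  | tail _ hbc ih =>
    by_contra hc
    have hmem : _ ∈ F.filter (fun e => e.1 ∈ A ∧ e.2 ∉ A) :=
      Multiset.mem_filter.2 ⟨hbc, ih, hc⟩
    rw [h] at hmem
    exact Multiset.notMem_zero _ hmem

/-- with `G_0 = G` and `G_{j+1}` obtained from `G_j` by reversing the edges of
a path `π_j` from `s`, fix `i ≥ 1` and let `S` be the set of vertices reachable from `s`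
in `G_i`.  If `ℓ` of the paths `π_0, …, π_{i-1}` end in `T = V \ S`, then `S` is a minimal
`ℓ`-edge-out component of `G` containing `s`: it has exactly `ℓ` outgoing edges in `G`,
and every proper subset of `S` containing `s` has strictly more than `ℓ` outgoing edges. -/
theorem stmt9 (E : Multiset (V × V)) (s : V) (i ℓ : ℕ) (hi : 1 ≤ i)
    (G : ℕ → Multiset (V × V)) (π : ℕ → List V)
    (hG0 : G 0 = E)
    (hpath : ∀ j < i, IsPathFrom (G j) s (π j))
    (hrev : ∀ j < i, G (j + 1) = revAlong (G j) s (π j))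
    (S : Finset V)
    (hS : ∀ v : V, v ∈ S ↔ Relation.ReflTransGen (fun a b => (a, b) ∈ G i) s v)
    (hℓ : ℓ = ((Finset.range i).filter
      (fun j => (s :: π j).getLast (by simp) ∉ S)).card)
    (hℓi : ℓ ≤ i) :
    s ∈ S ∧
      (E.filter (fun e => e.1 ∈ S ∧ e.2 ∉ S)).card = ℓ ∧
      ∀ S' : Finset V, S' ⊂ S → s ∈ S' →
        ℓ < (E.filter (fun e => e.1 ∈ S' ∧ e.2 ∉ S')).card := by
  have hsS : s ∈ S := (hS s).2 Relation.ReflTransGen.refl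
  -- key counting identity
  have key : ∀ (A : Finset V), s ∈ A → ∀ j ≤ i,
      ((G 0).filter (fun e => e.1 ∈ A ∧ e.2 ∉ A)).card
        = ((G j).filter (fun e => e.1 ∈ A ∧ e.2 ∉ A)).card
          + ((Finset.range j).filter
              (fun k => (s :: π k).getLast (List.cons_ne_nil s (π k)) ∉ A)).card := by
    intro A hA j hj
    induction j with
    | zero => simp
    | succ n ih =>
      have hn : n < i := hj
      rw [ih (le_of_lt hn)]
      have hrc := revAlong_count (G n) s (π n) A hA (hpath n hn)
      rw [← hrev n hn] at hrc
      have hrange : (Finset.range (n + 1)).filter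
            (fun k => (s :: π k).getLast (List.cons_ne_nil s (π k)) ∉ A)
          = if (s :: π n).getLast (List.cons_ne_nil s (π n)) ∉ A then
              insert n ((Finset.range n).filter
                (fun k => (s :: π k).getLast (List.cons_ne_nil s (π k)) ∉ A))
            else (Finset.range n).filter
                (fun k => (s :: π k).getLast (List.cons_ne_nil s (π k)) ∉ A) := by
        rw [Finset.range_add_one, Finset.filter_insert]
      have hnotmem : n ∉ (Finset.range n).filter
          (fun k => (s :: π k).getLast (List.cons_ne_nil s (π k)) ∉ A) := by
        simp
      by_cases hlast : (s :: π n).getLast (List.cons_ne_nil s (π n)) ∈ A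
      · rw [hrange, if_neg (by simpa using hlast)]
        rw [if_pos hlast] at hrc
        omega
      · rw [hrange, if_pos hlast, Finset.card_insert_of_notMem hnotmem]
        rw [if_neg hlast] at hrc
        omega
  -- G i has no outgoing edges from S
  have hGi : (G i).filter (fun e => e.1 ∈ S ∧ e.2 ∉ S) = 0 := by
    rw [Multiset.filter_eq_nil]
    rintro ⟨a, b⟩ hab ⟨ha, hb⟩
    exact hb ((hS b).2 (Relation.ReflTransGen.tail ((hS a).1 ha) hab))
  have keyS := key S hsS i le_rfl
  rw [hGi] at keyS
  simp only [Multiset.card_zero, zero_add] at keyS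
  refine ⟨hsS, ?_, ?_⟩
  · rw [← hG0, keyS, hℓ]
  · intro S' hsub hs'
    have keyS' := key S' hs' i le_rfl
    -- at least one edge leaves S' in G i
    have hpos : 1 ≤ ((G i).filter (fun e => e.1 ∈ S' ∧ e.2 ∉ S')).card := by
      by_contra hzero
      have h0 : (G i).filter (fun e => e.1 ∈ S' ∧ e.2 ∉ S') = 0 := by
        rw [← Multiset.card_eq_zero]; omega
      obtain ⟨v, hvS, hvS'⟩ := Finset.exists_of_ssubset hsub
      exact hvS' (reach_subset h0 hs' ((hS v).1 hvS))
    have hmono : ((Finset.range i).filter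
          (fun k => (s :: π k).getLast (List.cons_ne_nil s (π k)) ∉ S)).card
        ≤ ((Finset.range i).filter
          (fun k => (s :: π k).getLast (List.cons_ne_nil s (π k)) ∉ S')).card := by
      apply Finset.card_le_card
      intro k hk
      simp only [Finset.mem_filter] at hk ⊢
      exact ⟨hk.1, fun hmem => hk.2 (hsub.1 hmem)⟩
    rw [← hG0, keyS']
    rw [hℓ]
    omega
end

section
/- Let G = (V,E) be a directed graph with s ∈ V, G'_s its split graph, C' a minimal k-edge-out component of G'_s containing s_out, and C = {v ∈ V : v_out ∈ C'}. Then for every v ∈ C with v ≠ s, the vertex v_in also belongs to C'. (Equivalently: if v_out ∈ C' but v_in ∉ C', then removing from C' the set of vertices reachable from v_in within C' would yield a smaller k-edge-out component with the same number of outgoing edges, contradicting minimality.) -/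
/-!
Removing `v_out` from `C'` cannot create a new outgoing edge: the only edge entering `v_out`
is `(v_in, v_out)`, and `v_in ∉ C'`. So `C' \ {v_out}` is a proper subset containing `s_out`
with no more outgoing edges than `C'`, contradicting minimality.
-/

variable {V : Type*} [Fintype V] [DecidableEq V]

/-- The in-copy of a vertex in the split graph (with `s_in` identified with `s_out`). -/
def inV (s v : V) : V ⊕ V := if v = s then Sum.inr s else Sum.inl v

/-- The out-copy of a vertex in the split graph. -/
def outV (v : V) : V ⊕ V := Sum.inr v

/-- The edges of the split graph `G'_s`. -/
def splitEdges (E : Finset (V × V)) (s : V) : Finset ((V ⊕ V) × (V ⊕ V)) :=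
  (E.image (fun e => (outV e.1, inV s e.2))) ∪
    (Finset.univ.image (fun v => (inV s v, outV v)))

/-- The edges leaving a set `C'` in the split graph. -/
def leaving (E : Finset (V × V)) (s : V) (C' : Finset (V ⊕ V)) :
    Finset ((V ⊕ V) × (V ⊕ V)) :=
  (splitEdges E s).filter (fun e => e.1 ∈ C' ∧ e.2 ∉ C')

lemma Finset.filter_boundary_erase_subset {α : Type*} [DecidableEq α] {F : Finset (α × α)}
    {C : Finset α} {x : α} (hx : ∀ e ∈ F, e.2 = x → e.1 ∉ C) :
    F.filter (fun e => e.1 ∈ C.erase x ∧ e.2 ∉ C.erase x) ⊆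
      F.filter (fun e => e.1 ∈ C ∧ e.2 ∉ C) := by
  intro e he
  simp only [Finset.mem_filter, Finset.mem_erase] at he ⊢
  obtain ⟨heF, ⟨-, h1⟩, h2⟩ := he
  refine ⟨heF, h1, fun h2' => ?_⟩
  have he2 : e.2 = x := by by_contra hne; exact h2 ⟨hne, h2'⟩
  exact hx e heF he2 h1

lemma inV_eq_outV_iff {W : Type*} [DecidableEq W] {s v w : W} :
    inV s w = outV v ↔ w = s ∧ v = s := by
  unfold inV outV
  split_ifs with h <;> simp [h, eq_comm]

lemma fst_eq_inV_of_mem_splitEdges {E : Finset (V × V)} {s v : V}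
    {e : (V ⊕ V) × (V ⊕ V)} (he : e ∈ splitEdges E s) (he2 : e.2 = outV v) (hvs : v ≠ s) :
    e.1 = inV s v := by
  simp only [splitEdges, Finset.mem_union, Finset.mem_image] at he
  rcases he with ⟨⟨a, b⟩, -, rfl⟩ | ⟨w, -, rfl⟩
  · exact absurd (inV_eq_outV_iff.mp he2).2 hvs
  · obtain rfl : w = v := Sum.inr_injective he2
    rfl

lemma leaving_erase_outV_subset {E : Finset (V × V)} {s v : V} {C' : Finset (V ⊕ V)}
    (hvs : v ≠ s) (hvin : inV s v ∉ C') :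
    leaving E s (C'.erase (outV v)) ⊆ leaving E s C' :=
  Finset.filter_boundary_erase_subset fun _ he he2 =>
    fst_eq_inV_of_mem_splitEdges he he2 hvs ▸ hvin

theorem stmt13_general (E : Finset (V × V)) (s : V) (C' : Finset (V ⊕ V))
    (hsC' : outV s ∈ C')
    (hmin : ∀ D : Finset (V ⊕ V), D ⊂ C' → outV s ∈ D →
      (leaving E s C').card < (leaving E s D).card) :
    ∀ v : V, outV v ∈ C' → v ≠ s → inV s v ∈ C' := by
  intro v hv hvs
  by_contra hvin
  have hsv : outV s ≠ outV v := fun h => hvs (Sum.inr_injective h).symm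
  have hlt := hmin _ (Finset.erase_ssubset hv) (Finset.mem_erase.mpr ⟨hsv, hsC'⟩)
  exact (Finset.card_le_card (leaving_erase_outV_subset hvs hvin)).not_gt hlt

/-- if `C'` is a minimal `k`-edge-out component of the split graph `G'_s`
containing `s_out` and `C = {v : v_out ∈ C'}`, then for every `v ∈ C` with `v ≠ s`
the vertex `v_in` also belongs to `C'`. -/
theorem stmt13 (E : Finset (V × V)) (s : V) (k : ℕ) (C' : Finset (V ⊕ V))
    (hsC' : outV s ∈ C')
    (hk : (leaving E s C').card ≤ k)
    (hmin : ∀ D : Finset (V ⊕ V), D ⊂ C' → outV s ∈ D →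
      (leaving E s C').card < (leaving E s D).card) :
    ∀ v : V, outV v ∈ C' → v ≠ s → inV s v ∈ C' :=
  stmt13_general E s C' hsC' hmin
end
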